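/- Let Σ be an ER specification over a schema S, D an S-database, q(x⃗) an n-ary conjunctive query over S possibly with similarity atoms but without inequality atoms, and c⃗ an n-tuple of constants. Then c⃗ ∈ q(D_{E,V}) for some ⟨E,V⟩ ∈ MaxSol(D,Σ) if and only if c⃗ ∈ q(D_{E',V'}) for some ⟨E',V'⟩ ∈ Sol(D,Σ). -/

import Mathlib

namespace LacePlus

/-! ### Constants -/

/-- Sorts of constants: objects, values, tuple identifiers. -/
inductive CKind
  | obj | val | tid
deriving DecidableEq

/-- Constants: three pairwise disjoint infinite sets (objects, values, tids),
each indexed by the natural numbers. -/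
structure Const where
  kind : CKind
  id : ℕ
deriving DecidableEq

/-- A (value) cell: a tuple id together with a position. -/
abbrev Cell := ℕ × ℕ

abbrev ERel := Set (Const × Const)
abbrev VRel := Set (Cell × Cell)

/-- A family of binary similarity predicates on constants. -/
abbrev SimFam := ℕ → Const → Const → Prop

def tidC (t : ℕ) : Const := ⟨CKind.tid, t⟩

/-! ### Schemas and databases -/

/-- A database schema: a finite set of relation symbols (coded by naturals),
each with an arity and a type vector (`isObjPos R i = true` iff position `i`
of `R` is an object position). -/
structure Schema where
  rels : Finset ℕ
  arity : ℕ → ℕ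
  isObjPos : ℕ → ℕ → Bool

/-- A fact `R(t, c₁, …, c_k)`. -/
structure Fact where
  rel : ℕ
  tid : ℕ
  args : List Const
deriving DecidableEq

/-- The constant in position `i ∈ {1,…,k}` of a fact. -/
def Fact.arg (f : Fact) (i : ℕ) : Option Const :=
  if i = 0 then none else f.args[i - 1]?

/-- A (TID-annotated) `S`-database: a finite set of facts, with relation symbols
from `S`, correct arities, and each tid occurring in at most one fact. -/
structure DB (S : Schema) where
  facts : Finset Fact
  rels_mem : ∀ f ∈ facts, f.rel ∈ S.rels
  arity_eq : ∀ f ∈ facts, f.args.length = S.arity f.rel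
  tid_unique : ∀ f ∈ facts, ∀ f' ∈ facts, f.tid = f'.tid → f = f'

/-- `Dom(D)`: the constants occurring in `D`. -/
def DomD {S : Schema} (D : DB S) : Set Const :=
  {c | ∃ f ∈ D.facts, c ∈ f.args}

/-- `Obj(D)`: the constants occurring in object positions of `D` (w.r.t. `S`). -/
def ObjD (S : Schema) (D : DB S) : Set Const :=
  {c | ∃ f ∈ D.facts, ∃ i, S.isObjPos f.rel i = true ∧ f.arg i = some c}

/-- `Cells(D)`: the value cells of `D` (w.r.t. `S`). -/
def CellsD (S : Schema) (D : DB S) : Set Cell :=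
  {p | ∃ f ∈ D.facts, f.tid = p.1 ∧ 1 ≤ p.2 ∧ p.2 ≤ S.arity f.rel ∧
        S.isObjPos f.rel p.2 = false}

/-- `t[i] = c` in `D`. -/
def DB.HasVal {S : Schema} (D : DB S) (t i : ℕ) (c : Const) : Prop :=
  ∃ f ∈ D.facts, f.tid = t ∧ f.arg i = some c

/-- `D` is well-typed over `S`: object positions hold object constants and
value positions hold value constants. -/
def WellTyped (S : Schema) (D : DB S) : Prop :=
  ∀ f ∈ D.facts, ∀ i c, f.arg i = some c →
    (S.isObjPos f.rel i = true → c.kind = CKind.obj) ∧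
    (S.isObjPos f.rel i = false → c.kind = CKind.val)

/-! ### Equivalence relations -/

/-- `R` is an equivalence relation on the set `X` (as set of pairs). -/
def IsEquivOn {α : Type} (X : Set α) (R : Set (α × α)) : Prop :=
  R ⊆ X ×ˢ X ∧ (∀ x ∈ X, (x, x) ∈ R) ∧
  (∀ x y, (x, y) ∈ R → (y, x) ∈ R) ∧
  (∀ x y z, (x, y) ∈ R → (y, z) ∈ R → (x, z) ∈ R)

/-- `EqRel(P, X)`: the smallest equivalence relation on `X` extending `P`. -/
def EqRel {α : Type} (P : Set (α × α)) (X : Set α) : Set (α × α) :=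
  ⋂₀ {R | IsEquivOn X R ∧ P ⊆ R}

/-! ### Queries -/

inductive Term
  | var (v : ℕ)
  | const (c : Const)
deriving DecidableEq

/-- Atoms: relational atoms `R(u₀,u₁,…,u_k)` (with `u₀` a tid term),
similarity atoms `u ≈ₛ u'`, and inequality atoms `u ≠ u'`. -/
inductive Atom
  | rel (R : ℕ) (ts : List Term)
  | sim (s : ℕ) (u u' : Term)
  | neq (u u' : Term)
deriving DecidableEq

def Atom.terms : Atom → List Term
  | .rel _ ts => ts
  | .sim _ u u' => [u, u']
  | .neq u u' => [u, u']

def Atom.isRel : Atom → Prop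
  | .rel _ _ => True
  | _ => False

def Atom.isSim : Atom → Prop
  | .sim _ _ _ => True
  | _ => False

def Atom.isNeq : Atom → Prop
  | .neq _ _ => True
  | _ => False

/-- The (Boolean) query contains no inequality atoms. -/
def NoNeq (q : List Atom) : Prop := ∀ a ∈ q, ¬ a.isNeq

def OccursVar (q : List Atom) (v : ℕ) : Prop := ∃ a ∈ q, Term.var v ∈ a.terms

/-! ### Induced extended databases and query satisfaction (Definition 3) -/

/-- The set of constants in position `i ≥ 1` of fact `f` in the extended
database `D_{E,W}`: the `E`-class of `f`'s `i`-th constant for object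
positions, and the set of values of `W`-related cells for value positions. -/
def extArg {S : Schema} (D : DB S) (E : ERel) (W : VRel) (f : Fact) (i : ℕ) : Set Const :=
  if S.isObjPos f.rel i = true then
    {o' | ∃ o, f.arg i = some o ∧ (o, o') ∈ E}
  else
    {c | ∃ p : Cell, ((f.tid, i), p) ∈ W ∧ D.HasVal p.1 p.2 c}

/-- Requirement 2 of Definition 3, for a single relational atom with
assignment `g` to its positions. -/
def SatRelAtom {S : Schema} (D : DB S) (E : ERel) (W : VRel)
    (g : ℕ → Set Const) (R : ℕ) (ts : List Term) : Prop :=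
  ∃ f ∈ D.facts, f.rel = R ∧ ts.length = S.arity R + 1 ∧
    g 0 = {tidC f.tid} ∧
    (∀ i, 1 ≤ i → i ≤ S.arity R → g i = extArg D E W f i) ∧
    (∀ i c, ts[i]? = some (Term.const c) → c ∈ g i)

/-- The function `h` determined by the family `g` (Requirement 1 of
Definition 3): `h(a) = {a}` for constants, and for a variable the
intersection of the `g j i` over all its occurrences in relational atoms. -/
def hTerm (q : List Atom) (g : ℕ → ℕ → Set Const) : Term → Set Const
  | .const c => {c}
  | .var v => {c | ∀ j R ts, q[j]? = some (Atom.rel R ts) →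
      ∀ i, ts[i]? = some (Term.var v) → c ∈ g j i}

/-- `D_{E,W} ⊨ q` for a Boolean query `q` (Definition 3). -/
def Sat (sim : SimFam) {S : Schema} (D : DB S) (E : ERel) (W : VRel)
    (q : List Atom) : Prop :=
  ∃ g : ℕ → ℕ → Set Const,
    (∀ v, OccursVar q v → (hTerm q g (Term.var v)).Nonempty) ∧
    (∀ j R ts, q[j]? = some (Atom.rel R ts) → SatRelAtom D E W (g j) R ts) ∧
    (∀ (j : ℕ) u u', q[j]? = some (Atom.neq u u') → hTerm q g u ∩ hTerm q g u' = ∅) ∧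
    (∀ (j : ℕ) s u u', q[j]? = some (Atom.sim s u u') →
      ∃ c ∈ hTerm q g u, ∃ c' ∈ hTerm q g u', sim s c c')

/-! ### Substitution and answers -/

def Term.subst (σ : ℕ → Option Const) : Term → Term
  | .var v =>
    match σ v with
    | some c => .const c
    | none => .var v
  | .const c => .const c

def Atom.subst (σ : ℕ → Option Const) : Atom → Atom
  | .rel R ts => .rel R (ts.map (Term.subst σ))
  | .sim s u u' => .sim s (u.subst σ) (u'.subst σ)
  | .neq u u' => .neq (u.subst σ) (u'.subst σ)

def substQ (q : List Atom) (σ : ℕ → Option Const) : List Atom :=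
  q.map (Atom.subst σ)

def pairSubst (x y : ℕ) (a b : Const) : ℕ → Option Const :=
  fun v => if v = x then some a else if v = y then some b else none

/-- An `n`-ary conjunctive query: a list of atoms together with its tuple
of free (answer) variables. -/
structure CQ where
  atoms : List Atom
  free : List ℕ

/-- `q[c⃗]`: the Boolean query obtained by substituting the tuple `cs`
for the free variables of `q`. -/
def CQ.substTuple (q : CQ) (cs : List Const) : List Atom :=
  substQ q.atoms (fun v => (q.free.findIdx? (fun w => w = v)).bind fun k => cs[k]?)

/-! ### Rules and specifications -/

/-- A rule for objects, `q(x,y) → EqO(x,y)`. -/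
structure ObjRule where
  body : List Atom
  x : ℕ
  y : ℕ
deriving DecidableEq

/-- A rule for values, `q(x_t,y_t) → EqV(⟨x_t,i⟩,⟨y_t,j⟩)`. -/
structure ValRule where
  body : List Atom
  xt : ℕ
  yt : ℕ
  i : ℕ
  j : ℕ
deriving DecidableEq

/-- `(o,o') ∈ q(D_{E,W})` for the body of an object rule. -/
def AnswerO (sim : SimFam) {S : Schema} (D : DB S) (E : ERel) (W : VRel)
    (r : ObjRule) (o o' : Const) : Prop :=
  Sat sim D E W (substQ r.body (pairSubst r.x r.y o o'))

/-- `(t,t') ∈ q(D_{E,W})` for the body of a value rule. -/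
def AnswerV (sim : SimFam) {S : Schema} (D : DB S) (E : ERel) (W : VRel)
    (r : ValRule) (t t' : ℕ) : Prop :=
  Sat sim D E W (substQ r.body (pairSubst r.xt r.yt (tidC t) (tidC t')))

/-- `D_{E,W}` satisfies the object rule `r`: `q(D_{E,W}) ⊆ E`. -/
def SatObjRule (sim : SimFam) {S : Schema} (D : DB S) (E : ERel) (W : VRel)
    (r : ObjRule) : Prop :=
  ∀ o o', AnswerO sim D E W r o o' → (o, o') ∈ E

/-- `D_{E,W}` satisfies the value rule `r`. -/
def SatValRule (sim : SimFam) {S : Schema} (D : DB S) (E : ERel) (W : VRel)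
    (r : ValRule) : Prop :=
  ∀ t t', AnswerV sim D E W r t t' → ((t, r.i), (t', r.j)) ∈ W

/-- A LACE⁺ ER specification `Σ = ⟨Γ_O, Γ_V, Δ⟩` (hard/soft rules for objects,
hard/soft rules for values, denial constraints). -/
structure ERSpec where
  hardO : List ObjRule
  softO : List ObjRule
  hardV : List ValRule
  softV : List ValRule
  dcs : List (List Atom)

/-! ### Well-formedness -/

/-- Variable `v` occurs only in object positions (w.r.t. `S`) of the
relational atoms of `q`. -/
def OnlyObjPos (S : Schema) (q : List Atom) (v : ℕ) : Prop :=
  ∀ a ∈ q,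
    (∀ R ts, a = Atom.rel R ts → ∀ i, ts[i]? = some (Term.var v) →
      1 ≤ i ∧ i ≤ S.arity R ∧ S.isObjPos R i = true) ∧
    (¬ a.isRel → Term.var v ∉ a.terms)

/-- A well-formed rule for objects: no inequality atoms, and the free
variables occur, and occur only in object positions. -/
def ObjRule.WF (S : Schema) (r : ObjRule) : Prop :=
  NoNeq r.body ∧ OccursVar r.body r.x ∧ OccursVar r.body r.y ∧
  OnlyObjPos S r.body r.x ∧ OnlyObjPos S r.body r.y

/-- `v` occurs exactly once in `q`, namely at position 0 of the relational
atom number `jx`, whose relation symbol is `Rx`. -/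
def UniqueTidOcc (q : List Atom) (v : ℕ) (jx Rx : ℕ) : Prop :=
  (∃ ts, q[jx]? = some (Atom.rel Rx ts) ∧ ts[0]? = some (Term.var v)) ∧
  (∀ j R ts, q[j]? = some (Atom.rel R ts) → ∀ p, ts[p]? = some (Term.var v) →
    j = jx ∧ p = 0) ∧
  (∀ a ∈ q, ¬ a.isRel → Term.var v ∉ a.terms)

/-- A well-formed rule for values: no inequality atoms, `x_t` and `y_t` each
occur exactly once, at position 0 of relational atoms with relations `R_x`,
`R_y`, and `i`, `j` are value positions of `R_x`, `R_y`. -/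
def ValRule.WF (S : Schema) (r : ValRule) : Prop :=
  NoNeq r.body ∧
  ∃ jx Rx jy Ry, UniqueTidOcc r.body r.xt jx Rx ∧ UniqueTidOcc r.body r.yt jy Ry ∧
    1 ≤ r.i ∧ r.i ≤ S.arity Rx ∧ S.isObjPos Rx r.i = false ∧
    1 ≤ r.j ∧ r.j ≤ S.arity Ry ∧ S.isObjPos Ry r.j = false

/-- A well-formed denial constraint: a Boolean CQ with inequality atoms
(no similarity atoms), safe: each variable of an inequality atom occurs in
some relational atom. -/
def DCWF (δ : List Atom) : Prop :=
  (∀ a ∈ δ, ¬ a.isSim) ∧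
  (∀ a ∈ δ, ∀ u u', a = Atom.neq u u' →
    ∃ v v', u = Term.var v ∧ u' = Term.var v' ∧
      (∃ b ∈ δ, ∃ R ts, b = Atom.rel R ts ∧ Term.var v ∈ ts) ∧
      (∃ b ∈ δ, ∃ R ts, b = Atom.rel R ts ∧ Term.var v' ∈ ts))

/-- Well-formed ER specification over `S`. -/
def ERSpec.WF (S : Schema) (Sp : ERSpec) : Prop :=
  (∀ r ∈ Sp.hardO, r.WF S) ∧ (∀ r ∈ Sp.softO, r.WF S) ∧
  (∀ r ∈ Sp.hardV, r.WF S) ∧ (∀ r ∈ Sp.softV, r.WF S) ∧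
  (∀ δ ∈ Sp.dcs, DCWF δ)

/-! ### Candidate solutions and solutions (Definition 4) -/

inductive CandSol (sim : SimFam) {S : Schema} (D : DB S) (Sp : ERSpec) :
    ERel → VRel → Prop
  | base : CandSol sim D Sp (EqRel ∅ (ObjD S D)) (EqRel ∅ (CellsD S D))
  | stepO {E : ERel} {W : VRel} {o o' : Const} (r : ObjRule) :
      r ∈ Sp.hardO ∨ r ∈ Sp.softO → CandSol sim D Sp E W →
      AnswerO sim D E W r o o' →
      CandSol sim D Sp (EqRel (E ∪ {(o, o')}) (ObjD S D)) W
  | stepV {E : ERel} {W : VRel} {t t' : ℕ} (r : ValRule) :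
      r ∈ Sp.hardV ∨ r ∈ Sp.softV → CandSol sim D Sp E W →
      AnswerV sim D E W r t t' →
      CandSol sim D Sp E (EqRel (W ∪ {((t, r.i), (t', r.j))}) (CellsD S D))

/-- `D_{E,W}` satisfies all hard rules of `Sp`. -/
def SatHard (sim : SimFam) {S : Schema} (D : DB S) (Sp : ERSpec)
    (E : ERel) (W : VRel) : Prop :=
  (∀ r ∈ Sp.hardO, SatObjRule sim D E W r) ∧
  (∀ r ∈ Sp.hardV, SatValRule sim D E W r)

/-- `⟨E,W⟩ ∈ Sol(D,Σ)`: a candidate solution whose induced database satisfies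
all hard rules and all denial constraints. -/
def Solution (sim : SimFam) {S : Schema} (D : DB S) (Sp : ERSpec)
    (E : ERel) (W : VRel) : Prop :=
  CandSol sim D Sp E W ∧ SatHard sim D Sp E W ∧
  (∀ δ ∈ Sp.dcs, ¬ Sat sim D E W δ)

/-- `⟨E,W⟩ ∈ MaxSol(D,Σ)`: a solution such that no solution `⟨E',W'⟩`
satisfies `E ∪ V ⊊ E' ∪ V'`. -/
def MaxSolution (sim : SimFam) {S : Schema} (D : DB S) (Sp : ERSpec)
    (E : ERel) (W : VRel) : Prop :=
  Solution sim D Sp E W ∧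
  ¬ ∃ E' W', Solution sim D Sp E' W' ∧ E ⊆ E' ∧ W ⊆ W' ∧ ¬ (E' ⊆ E ∧ W' ⊆ W)

/-! ### Hard closure -/

/-- `⟨Eh,Wh⟩` is the hard closure of the candidate solution `⟨E0,W0⟩`:
the least candidate solution extending `⟨E0,W0⟩` that satisfies all hard
rules. -/
def IsHardClosure (sim : SimFam) {S : Schema} (D : DB S) (Sp : ERSpec)
    (E0 : ERel) (W0 : VRel) (Eh : ERel) (Wh : VRel) : Prop :=
  CandSol sim D Sp Eh Wh ∧ E0 ⊆ Eh ∧ W0 ⊆ Wh ∧ SatHard sim D Sp Eh Wh ∧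
  ∀ E W, CandSol sim D Sp E W → E0 ⊆ E → W0 ⊆ W → SatHard sim D Sp E W →
    Eh ⊆ E ∧ Wh ⊆ W

/-! ### The simulation construction -/

/-- The schema `S_V`: `S` with all object positions changed to value
positions. -/
def Schema.toValSchema (S : Schema) : Schema :=
  { rels := S.rels, arity := S.arity, isObjPos := fun _ _ => false }

/-- `D^V`: the database `D` viewed as an `S_V`-database (all object constants
treated as value constants). -/
def DB.toVal {S : Schema} (D : DB S) : DB S.toValSchema :=
  { facts := D.facts
    rels_mem := D.rels_mem
    arity_eq := D.arity_eq
    tid_unique := D.tid_unique }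

/-- `V_E`: the pairs of cells `(⟨t,i⟩,⟨t',j⟩)` with `(t[i],t'[j]) ∈ E`. -/
def VE {S : Schema} (D : DB S) (E : ERel) : VRel :=
  {p | ∃ c c', D.HasVal p.1.1 p.1.2 c ∧ D.HasVal p.2.1 p.2.2 c' ∧ (c, c') ∈ E}

/-- `r'` is a translation of the object rule `r` into a rule for values:
same body, and the head cells `⟨x_t,i⟩`, `⟨y_t,j⟩` are positions of atoms of
the body containing `x` and `y`, with `x_t`, `y_t` the corresponding tid
variables. -/
def IsObjToValRule (r : ObjRule) (r' : ValRule) : Prop :=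
  r'.body = r.body ∧
  (∃ jx : ℕ, ∃ Rx ts, r.body[jx]? = some (Atom.rel Rx ts) ∧
    ts[0]? = some (Term.var r'.xt) ∧ ts[r'.i]? = some (Term.var r.x) ∧ 1 ≤ r'.i) ∧
  (∃ jy : ℕ, ∃ Ry ts, r.body[jy]? = some (Atom.rel Ry ts) ∧
    ts[0]? = some (Term.var r'.yt) ∧ ts[r'.j]? = some (Term.var r.y) ∧ 1 ≤ r'.j)

/-- The hard rule of `Γ_global` for relations `P`, `P'` and (object)
positions `i` of `P` and `j` of `P'`:
`P(x_t,u₁,…,z,…,u_k) ∧ P'(y_t,v₁,…,z,…,v_ℓ) ⇒ EqV(⟨x_t,i⟩,⟨y_t,j⟩)`,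
with `x_t, y_t, z` and all the `u`'s and `v`'s pairwise distinct variables. -/
def globalRule (S : Schema) (P P' i j : ℕ) : ValRule :=
  { body := [Atom.rel P (Term.var 0 ::
        (List.range (S.arity P)).map fun p =>
          if p + 1 = i then Term.var 2 else Term.var (3 + p)),
      Atom.rel P' (Term.var 1 ::
        (List.range (S.arity P')).map fun p =>
          if p + 1 = j then Term.var 2 else Term.var (3 + S.arity P + p))]
    xt := 0, yt := 1, i := i, j := j }

/-- `Sp'` is (a) `Σ' = ⟨∅, Γ_V ∪ Γ_{O⇝V} ∪ Γ_global, Δ⟩` obtained from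
`Sp = ⟨Γ_O, Γ_V, Δ⟩` by the simulation construction. -/
structure IsSimSpec (S : Schema) (Sp Sp' : ERSpec) : Prop where
  hardO_nil : Sp'.hardO = []
  softO_nil : Sp'.softO = []
  dcs_eq : Sp'.dcs = Sp.dcs
  hardV_sub : ∀ r ∈ Sp.hardV, r ∈ Sp'.hardV
  softV_sub : ∀ r ∈ Sp.softV, r ∈ Sp'.softV
  hardO_trans : ∀ r ∈ Sp.hardO, ∃ r' ∈ Sp'.hardV, IsObjToValRule r r'
  softO_trans : ∀ r ∈ Sp.softO, ∃ r' ∈ Sp'.softV, IsObjToValRule r r'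
  global_mem : ∀ P ∈ S.rels, ∀ P' ∈ S.rels, ∀ i j,
    1 ≤ i → i ≤ S.arity P → S.isObjPos P i = true →
    1 ≤ j → j ≤ S.arity P' → S.isObjPos P' j = true →
    globalRule S P P' i j ∈ Sp'.hardV
  hardV_only : ∀ r' ∈ Sp'.hardV, r' ∈ Sp.hardV ∨
    (∃ r ∈ Sp.hardO, IsObjToValRule r r') ∨
    (∃ P P' i j, P ∈ S.rels ∧ P' ∈ S.rels ∧
      1 ≤ i ∧ i ≤ S.arity P ∧ S.isObjPos P i = true ∧
      1 ≤ j ∧ j ≤ S.arity P' ∧ S.isObjPos P' j = true ∧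
      r' = globalRule S P P' i j)
  softV_only : ∀ r' ∈ Sp'.softV, r' ∈ Sp.softV ∨
    ∃ r ∈ Sp.softO, IsObjToValRule r r'

/-- A cell of `D^V` holding an object constant of the original database. -/
def IsObjCell {S : Schema} (D : DB S) (p : Cell) : Prop :=
  ∃ c, D.HasVal p.1 p.2 c ∧ c.kind = CKind.obj

/-- A cell of `D^V` holding a value constant of the original database. -/
def IsValCell {S : Schema} (D : DB S) (p : Cell) : Prop :=
  ∃ c, D.HasVal p.1 p.2 c ∧ c.kind = CKind.val

/-! Answers of a query without inequality atoms are monotone in `⟨E,V⟩`: enlarging `E` or `V`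
only enlarges the sets in the extended facts of `D_{E,V}`. Candidate solutions range over a
finite set (each component is an equivalence relation on the finite `Obj(D)` or `Cells(D)`, or
the junk value `univ`), so every solution lies below a maximal one, which keeps every answer. -/

-- If `P` leaves `X ×ˢ X`, nothing is an equivalence on `X` extending `P`, and the empty
-- intersection is `univ`.
lemma eqRel_subset_or_eq_univ {α : Type} (P : Set (α × α)) (X : Set α) :
    EqRel P X ⊆ X ×ˢ X ∨ EqRel P X = Set.univ := by
  by_cases hP : P ⊆ X ×ˢ X
  · left
    apply Set.sInter_subset_of_mem
    exact ⟨⟨subset_rfl, fun x hx => ⟨hx, hx⟩, fun x y hxy => ⟨hxy.2, hxy.1⟩,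
      fun x y z hxy hyz => ⟨hxy.1, hyz.2⟩⟩, hP⟩
  · right
    have hnone : {R | IsEquivOn X R ∧ P ⊆ R} = ∅ :=
      Set.eq_empty_iff_forall_notMem.2 fun R hR => hP (hR.2.trans hR.1.1)
    rw [EqRel, hnone, Set.sInter_empty]

lemma objD_finite (S : Schema) (D : DB S) : (ObjD S D).Finite := by
  refine (D.facts.finite_toSet.biUnion fun f _ => f.args.finite_toSet).subset ?_
  rintro c ⟨f, hf, i, -, harg⟩
  refine Set.mem_biUnion hf ?_
  unfold Fact.arg at harg
  split at harg
  · exact nomatch harg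
  · exact List.mem_of_getElem? harg

lemma cellsD_finite (S : Schema) (D : DB S) : (CellsD S D).Finite := by
  refine (D.facts.finite_toSet.biUnion fun f _ =>
    (Set.finite_singleton f.tid).prod (Set.finite_Iic (S.arity f.rel))).subset ?_
  rintro ⟨t, i⟩ ⟨f, hf, rfl, -, hi, -⟩
  exact Set.mem_biUnion hf ⟨rfl, hi⟩

section Solutions

variable {sim : SimFam} {S : Schema} {D : DB S} {Sp : ERSpec}

lemma CandSol.subset_or_eq_univ {E : ERel} {W : VRel} (h : CandSol sim D Sp E W) :
    (E ⊆ ObjD S D ×ˢ ObjD S D ∨ E = Set.univ) ∧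
      (W ⊆ CellsD S D ×ˢ CellsD S D ∨ W = Set.univ) := by
  induction h with
  | base => exact ⟨eqRel_subset_or_eq_univ _ _, eqRel_subset_or_eq_univ _ _⟩
  | stepO _ _ _ _ ih => exact ⟨eqRel_subset_or_eq_univ _ _, ih.2⟩
  | stepV _ _ _ _ ih => exact ⟨ih.1, eqRel_subset_or_eq_univ _ _⟩

variable (sim D Sp) in
lemma setOf_candSol_finite : {z : ERel × VRel | CandSol sim D Sp z.1 z.2}.Finite := by
  have hE := (((objD_finite S D).prod (objD_finite S D)).finite_subsets).insert Set.univ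
  have hW := (((cellsD_finite S D).prod (cellsD_finite S D)).finite_subsets).insert Set.univ
  refine (hE.prod hW).subset fun z hz => ?_
  obtain ⟨hzE, hzW⟩ := CandSol.subset_or_eq_univ hz
  exact ⟨hzE.symm, hzW.symm⟩

lemma maxSolution_iff_maximal {E : ERel} {W : VRel} :
    MaxSolution sim D Sp E W ↔
      Maximal (fun z : ERel × VRel => Solution sim D Sp z.1 z.2) (E, W) := by
  simp only [MaxSolution, Maximal, Prod.forall, Prod.mk_le_mk, not_exists, not_and, and_imp,
    Classical.not_imp, not_not]

lemma Solution.exists_maxSolution_superset {E₀ : ERel} {W₀ : VRel}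
    (h : Solution sim D Sp E₀ W₀) :
    ∃ E W, MaxSolution sim D Sp E W ∧ E₀ ⊆ E ∧ W₀ ⊆ W := by
  have hfin : {z : ERel × VRel | Solution sim D Sp z.1 z.2}.Finite :=
    (setOf_candSol_finite sim D Sp).subset fun _ hz => hz.1
  obtain ⟨⟨E, W⟩, ⟨hE, hW⟩, hmax⟩ := hfin.exists_le_maximal (a := (E₀, W₀)) h
  exact ⟨E, W, maxSolution_iff_maximal.2 hmax, hE, hW⟩

end Solutions

section Monotonicity

variable {S : Schema} (D : DB S) {E E' : ERel} {W W' : VRel}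

lemma DB.eq_of_singleton_tidC_eq {f f' : Fact} (hf : f ∈ D.facts) (hf' : f' ∈ D.facts)
    (h : ({tidC f.tid} : Set Const) = {tidC f'.tid}) : f = f' := by
  refine D.tid_unique f hf f' hf' ?_
  simpa [tidC] using h

lemma extArg_mono (hE : E ⊆ E') (hW : W ⊆ W') (f : Fact) (i : ℕ) :
    extArg D E W f i ⊆ extArg D E' W' f i := by
  unfold extArg
  split
  · rintro c ⟨o, ho, hoE⟩; exact ⟨o, ho, hE hoE⟩
  · rintro c ⟨p, hp, hv⟩; exact ⟨p, hW hp, hv⟩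

/-- The argument sets of the fact of `D_{E,W}` whose tid set is `g 0`. -/
def factAssignment (E : ERel) (W : VRel) (g : ℕ → Set Const) (i : ℕ) : Set Const :=
  if i = 0 then g 0 else {c | ∃ f ∈ D.facts, g 0 = {tidC f.tid} ∧ c ∈ extArg D E W f i}

variable {D}

lemma SatRelAtom.subset_factAssignment {g : ℕ → Set Const} {R : ℕ} {ts : List Term}
    (hE : E ⊆ E') (hW : W ⊆ W') (h : SatRelAtom D E W g R ts) {i : ℕ} (hi : i < ts.length) :
    g i ⊆ factAssignment D E' W' g i := by
  obtain ⟨f, hf, -, hlen, h0, hg, -⟩ := h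
  rcases Nat.eq_zero_or_pos i with rfl | hpos
  · simp [factAssignment]
  · intro c hc
    simp only [factAssignment, if_neg hpos.ne', Set.mem_ofPred_eq]
    exact ⟨f, hf, h0, extArg_mono D hE hW f i (hg i hpos (by omega) ▸ hc)⟩

lemma SatRelAtom.mono {g : ℕ → Set Const} {R : ℕ} {ts : List Term}
    (hE : E ⊆ E') (hW : W ⊆ W') (h : SatRelAtom D E W g R ts) :
    SatRelAtom D E' W' (factAssignment D E' W' g) R ts := by
  obtain ⟨f, hf, hR, hlen, h0, hg, hconst⟩ := h
  refine ⟨f, hf, hR, hlen, by simp [factAssignment, h0], fun i hi _ => ?_, fun i c hc => ?_⟩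
  · ext c
    simp only [factAssignment, if_neg (Nat.one_le_iff_ne_zero.1 hi), Set.mem_ofPred_eq]
    refine ⟨fun ⟨f', hf', h0', hc⟩ => ?_, fun hc => ⟨f, hf, h0, hc⟩⟩
    rwa [D.eq_of_singleton_tidC_eq hf hf' (h0.symm.trans h0')]
  · exact SatRelAtom.subset_factAssignment hE hW ⟨f, hf, hR, hlen, h0, hg, hconst⟩
      (List.getElem?_eq_some_iff.1 hc).1 (hconst i c hc)

lemma hTerm_mono {q : List Atom} {g g' : ℕ → ℕ → Set Const}
    (hg : ∀ j R ts, q[j]? = some (Atom.rel R ts) → ∀ i < ts.length, g j i ⊆ g' j i) :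
    ∀ u, hTerm q g u ⊆ hTerm q g' u
  | .const _ => subset_rfl
  | .var _ => fun _ hc j R ts hj i hi =>
      hg j R ts hj i (List.getElem?_eq_some_iff.1 hi).1 (hc j R ts hj i hi)

lemma NoNeq.substQ {q : List Atom} (hq : NoNeq q) (σ : ℕ → Option Const) :
    NoNeq (substQ q σ) := by
  intro a ha
  obtain ⟨b, hb, rfl⟩ := List.mem_map.1 ha
  cases b with
  | rel => simp [Atom.subst, Atom.isNeq]
  | sim => simp [Atom.subst, Atom.isNeq]
  | neq => exact (hq _ hb trivial).elim

lemma Sat.mono {sim : SimFam} {q : List Atom} (hE : E ⊆ E') (hW : W ⊆ W') (hq : NoNeq q)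
    (h : Sat sim D E W q) : Sat sim D E' W' q := by
  obtain ⟨g, hne, hrel, -, hsim⟩ := h
  have hsub := hTerm_mono (g' := fun j => factAssignment D E' W' (g j)) fun j R ts hj _ hi =>
    (hrel j R ts hj).subset_factAssignment hE hW hi
  refine ⟨fun j => factAssignment D E' W' (g j), fun v hv => (hne v hv).mono (hsub _),
    fun j R ts hj => (hrel j R ts hj).mono hE hW,
    fun j u u' hj => (hq _ (List.mem_of_getElem? hj) trivial).elim, fun j s u u' hj => ?_⟩
  obtain ⟨c, hc, c', hc', hs⟩ := hsim j s u u' hj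
  exact ⟨c, hsub u hc, c', hsub u' hc', hs⟩

end Monotonicity

end LacePlus

theorem LacePlus.answer_preservation_general (sim : SimFam) {S : Schema} (D : DB S)
    (Sp : ERSpec)
    (q : CQ) (hq : NoNeq q.atoms)
    (cs : List Const) :
    (∃ E W, MaxSolution sim D Sp E W ∧ Sat sim D E W (q.substTuple cs)) ↔
      (∃ E' W', Solution sim D Sp E' W' ∧ Sat sim D E' W' (q.substTuple cs)) := by
  refine ⟨fun ⟨E, W, hmax, hsat⟩ => ⟨E, W, hmax.1, hsat⟩, ?_⟩
  rintro ⟨E₀, W₀, hsol, hsat⟩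
  obtain ⟨E, W, hmax, hE, hW⟩ := hsol.exists_maxSolution_superset
  exact ⟨E, W, hmax, hsat.mono hE hW (hq.substQ _)⟩

/-- **Lemma 3 (preservation).** Let `Σ` be an ER specification over `S`, `D`
an `S`-database, `q(x⃗)` an `n`-ary CQ over `S` possibly with similarity atoms
but without inequality atoms, and `c⃗` an `n`-tuple of constants. Then
`c⃗ ∈ q(D_{E,V})` for some `⟨E,V⟩ ∈ MaxSol(D,Σ)` iff `c⃗ ∈ q(D_{E',V'})` for
some `⟨E',V'⟩ ∈ Sol(D,Σ)`. -/
theorem LacePlus.answer_preservation (sim : SimFam) {S : Schema} (D : DB S)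
    (hD : WellTyped S D) (Sp : ERSpec) (hWF : Sp.WF S)
    (q : CQ) (hq : NoNeq q.atoms)
    (cs : List Const) (hlen : cs.length = q.free.length) :
    (∃ E W, MaxSolution sim D Sp E W ∧ Sat sim D E W (q.substTuple cs)) ↔
      (∃ E' W', Solution sim D Sp E' W' ∧ Sat sim D E' W' (q.substTuple cs)) :=
  LacePlus.answer_preservation_general sim D Sp q hq cs
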